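/- In a finite group Q, suppose x, y ∈ Q are conjugate and y·x·y⁻¹ = x². Then x = 1. -/

import Mathlib

/-!
Conjugating by `y` squares `x`, so conjugating by `y ^ n` raises `x` to the power `2 ^ n`. Since `y`
is conjugate to `x`, taking `n = orderOf x` gives `x ^ 2 ^ n = x`, i.e. `2 ^ n ≡ 1 [MOD n]`. This
forces `n = 1`: for the least prime `p ∣ n`, the order of `2` modulo `p` divides both `n` and
`p - 1`, which are coprime, so `2 ≡ 1 [MOD p]`, which is absurd.
-/

theorem ZMod.natCast_minFac_eq_one_of_pow_modEq_one {a n : ℕ} (hn₀ : n ≠ 0) (hn₁ : n ≠ 1)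
    (h : a ^ n ≡ 1 [MOD n]) : (a : ZMod n.minFac) = 1 := by
  set p := n.minFac
  have : Fact p.Prime := ⟨Nat.minFac_prime hn₁⟩
  have hpow : (a : ZMod p) ^ n = 1 := by
    exact_mod_cast (ZMod.natCast_eq_natCast_iff _ _ _).mpr (h.of_dvd (Nat.minFac_dvd n))
  have ha : (a : ZMod p) ≠ 0 := by
    rintro ha
    rw [ha, zero_pow hn₀] at hpow
    exact zero_ne_one hpow
  have hcop : n.gcd (p - 1) = 1 :=
    Nat.gcd_eq_one_of_lt_minFac (Nat.sub_ne_zero_of_lt (Fact.out : p.Prime).one_lt)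
      (Nat.sub_lt (Nat.minFac_pos n) one_pos)
  simpa [hcop] using pow_gcd_eq_one.mpr ⟨hpow, ZMod.pow_card_sub_one_eq_one ha⟩

theorem Nat.eq_one_of_two_pow_modEq_one {n : ℕ} (hn : n ≠ 0) (h : 2 ^ n ≡ 1 [MOD n]) :
    n = 1 := by
  by_contra hn₁
  have : Fact n.minFac.Prime := ⟨Nat.minFac_prime hn₁⟩
  have h2 := ZMod.natCast_minFac_eq_one_of_pow_modEq_one hn hn₁ h
  push_cast at h2
  exact one_ne_zero (by linear_combination h2 : (1 : ZMod n.minFac) = 0)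

theorem conj_pow_eq_pow_pow_of_conj_eq_pow {G : Type*} [Group G] {x y : G} {m : ℕ}
    (h : y * x * y⁻¹ = x ^ m) (k : ℕ) : y ^ k * x * (y ^ k)⁻¹ = x ^ m ^ k := by
  induction k with
  | zero => simp
  | succ k ih =>
    calc y ^ (k + 1) * x * (y ^ (k + 1))⁻¹ = y * (y ^ k * x * (y ^ k)⁻¹) * y⁻¹ := by group
      _ = (y * x * y⁻¹) ^ m ^ k := by rw [ih, conj_pow]
      _ = x ^ m ^ (k + 1) := by rw [h, ← pow_mul, pow_succ']

/-- In a finite group, if `x` and `y` are conjugate and `y x y⁻¹ = x²`, then `x = 1`. -/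
theorem stmt7 {Q : Type*} [Group Q] [Finite Q] (x y : Q) (hconj : IsConj x y)
    (h : y * x * y⁻¹ = x ^ 2) : x = 1 := by
  obtain ⟨c, hc⟩ := hconj
  have hy : orderOf y = orderOf x := (SemiconjBy.orderOf_eq _ hc).symm
  have hfix : x ^ 2 ^ orderOf x = x ^ 1 := by
    rw [← conj_pow_eq_pow_pow_of_conj_eq_pow h, ← hy, pow_orderOf_eq_one]
    group
  rw [pow_eq_pow_iff_modEq] at hfix
  exact orderOf_eq_one_iff.mp (Nat.eq_one_of_two_pow_modEq_one (orderOf_pos x).ne' hfix)
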